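/- Fix r > 0, η > 0, ϑ > 0. For each x ∈ ℝ, the function θ ↦ (1/2) x²/θ − η log(θ/ϑ) + (θ/ϑ)^r on (0, ∞) attains its minimum at some θ* satisfying θ* ≥ ϑ (η/r)^{1/r}, with equality when x = 0. -/

import Mathlib

/-!
With `v = (θ/ϑ)^r`, the part `(θ/ϑ)^r - η log(θ/ϑ)` of `P` equals `v - (η/r) log v`, which
`log y ≤ y - 1` shows to be minimal at `v = η/r`, i.e. at `θ₀ = ϑ (η/r)^(1/r)`. The remaining term
`x²/(2θ)` is nonincreasing, so nothing left of `θ₀` beats `θ₀`; on `[θ₀, ∞)` the continuous,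
coercive `P` attains its minimum.
-/

open Real Filter Set Asymptotics

theorem sub_mul_log_le_sub_mul_log {c v : ℝ} (hc : 0 < c) (hv : 0 < v) :
    c - c * log c ≤ v - c * log v := by
  have h := log_le_sub_one_of_pos (div_pos hv hc)
  rw [log_div hv.ne' hc.ne', le_sub_iff_add_le, le_div_iff₀ hc] at h
  nlinarith

theorem rpow_sub_mul_log_le {r η u : ℝ} (hr : 0 < r) (hη : 0 < η) (hu : 0 < u) :
    ((η / r) ^ (1 / r)) ^ r - η * log ((η / r) ^ (1 / r)) ≤ u ^ r - η * log u := by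
  have hlog : ∀ {v : ℝ}, 0 < v → η * log v = η / r * log (v ^ r) := fun hv => by
    rw [log_rpow hv]
    field_simp
  rw [hlog (by positivity), hlog hu, one_div, rpow_inv_rpow (by positivity) hr.ne']
  exact sub_mul_log_le_sub_mul_log (by positivity) (rpow_pos_of_pos hu r)

theorem tendsto_rpow_sub_mul_log_atTop {r : ℝ} (hr : 0 < r) (η : ℝ) :
    Tendsto (fun u => u ^ r - η * log u) atTop atTop :=
  (IsEquivalent.refl.sub_isLittleO ((isLittleO_log_rpow_atTop hr).const_mul_left η)).symm
    |>.tendsto_atTop (tendsto_rpow_atTop hr)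

theorem ContinuousOn.exists_isMinOn_Ici {f : ℝ → ℝ} {a : ℝ} (hf : ContinuousOn f (Ici a))
    (htop : Tendsto f atTop atTop) : ∃ m ∈ Ici a, IsMinOn f (Ici a) m := by
  refine hf.exists_isMinOn' isClosed_Ici self_mem_Ici ?_
  rw [cocompact_eq_atBot_atTop, eventually_inf_principal, eventually_sup]
  constructor
  · filter_upwards [eventually_lt_atBot a] with x hx hxa using absurd hxa (not_le.2 hx)
  · filter_upwards [htop.eventually_ge_atTop (f a)] with x hx _ using hx

noncomputable def penalty (x η ϑ r θ : ℝ) : ℝ :=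
  1 / 2 * x ^ 2 / θ - η * log (θ / ϑ) + (θ / ϑ) ^ r

section Penalty

variable {x η ϑ r : ℝ}

theorem continuousOn_penalty (hϑ : ϑ ≠ 0) : ContinuousOn (penalty x η ϑ r) (Ioi 0) := by
  unfold penalty
  fun_prop (disch := intro θ (hθ : 0 < θ); positivity)

theorem tendsto_penalty_atTop (hr : 0 < r) (hϑ : 0 < ϑ) :
    Tendsto (penalty x η ϑ r) atTop atTop := by
  refine tendsto_atTop_mono' atTop ?_
    ((tendsto_rpow_sub_mul_log_atTop hr η).comp (tendsto_id.atTop_div_const hϑ))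
  filter_upwards [eventually_gt_atTop 0] with θ hθ
  have : 0 ≤ 1 / 2 * x ^ 2 / θ := by positivity
  simp only [penalty, Function.comp_apply, id]
  linarith

theorem penalty_le_of_le (hr : 0 < r) (hη : 0 < η) (hϑ : 0 < ϑ) {θ : ℝ} (hθ : 0 < θ)
    (hθle : θ ≤ ϑ * (η / r) ^ (1 / r)) :
    penalty x η ϑ r (ϑ * (η / r) ^ (1 / r)) ≤ penalty x η ϑ r θ := by
  have hlog := rpow_sub_mul_log_le hr hη (div_pos hθ hϑ)
  have hquad : 1 / 2 * x ^ 2 / (ϑ * (η / r) ^ (1 / r)) ≤ 1 / 2 * x ^ 2 / θ := by gcongr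
  unfold penalty
  rw [mul_div_cancel_left₀ _ hϑ.ne']
  linarith

theorem penalty_zero_le (hr : 0 < r) (hη : 0 < η) (hϑ : 0 < ϑ) {θ : ℝ} (hθ : 0 < θ) :
    penalty 0 η ϑ r (ϑ * (η / r) ^ (1 / r)) ≤ penalty 0 η ϑ r θ := by
  have hlog := rpow_sub_mul_log_le hr hη (div_pos hθ hϑ)
  simp only [penalty, zero_pow two_ne_zero, mul_zero, zero_div]
  rw [mul_div_cancel_left₀ _ hϑ.ne']
  linarith

end Penalty

theorem stmt_8 (r η ϑ x : ℝ) (hr : 0 < r) (hη : 0 < η) (hϑ : 0 < ϑ) :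
    let P : ℝ → ℝ := fun θ => (1/2) * x ^ 2 / θ - η * Real.log (θ / ϑ) + (θ / ϑ) ^ r
    ∃ θs : ℝ, 0 < θs ∧ (∀ θ : ℝ, 0 < θ → P θs ≤ P θ) ∧
      ϑ * (η / r) ^ (1 / r) ≤ θs ∧
      (x = 0 → θs = ϑ * (η / r) ^ (1 / r)) := by
  intro P
  have hθ₀ : 0 < ϑ * (η / r) ^ (1 / r) := by positivity
  by_cases hx : x = 0
  · subst hx
    exact ⟨_, hθ₀, fun θ hθ => penalty_zero_le hr hη hϑ hθ, le_rfl, fun _ => rfl⟩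
  obtain ⟨θs, hθs, hmin⟩ := ((continuousOn_penalty (x := x) (η := η) (r := r) hϑ.ne').mono
    (Ici_subset_Ioi.2 hθ₀)).exists_isMinOn_Ici (tendsto_penalty_atTop hr hϑ)
  refine ⟨θs, hθ₀.trans_le hθs, fun θ hθ => ?_, hθs, fun h => absurd h hx⟩
  rcases le_total θ (ϑ * (η / r) ^ (1 / r)) with hle | hge
  · exact (hmin self_mem_Ici).trans (penalty_le_of_le hr hη hϑ hθ hle)
  · exact hmin hge
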